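/- Let X be a Banach space and C > 0 such that wca_ρ(x_n) ≤ C·wk_X({x_n : n ∈ ℕ}) for every bounded sequence (x_n) in X. Then for every Banach space Y and every bounded linear operator T : Y → X, cc(T*) ≤ 2C·wk_X(T(B_Y)), where T* : X* → Y* is the adjoint and B_Y is the closed unit ball of Y. -/

import Mathlib

open Metric NormedSpace Filter Topology Set

noncomputable section

/-- A subset of a Banach space is weakly compact if it is compact in the weak topology. -/
def IsWeaklyCompact {Z : Type*} [NormedAddCommGroup Z] [NormedSpace ℝ Z] (K : Set Z) : Prop :=
  IsCompact (toWeakSpace ℝ Z '' K)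

/-- `ca (x_k) = inf_n sup_{i,j ≥ n} ‖x_i - x_j‖`. -/
def ca {Z : Type*} [NormedAddCommGroup Z] (x : ℕ → Z) : ℝ :=
  ⨅ n : ℕ, sSup {r : ℝ | ∃ i j : ℕ, n ≤ i ∧ n ≤ j ∧ r = ‖x i - x j‖}

/-- `wca` is the infimum of `ca` over all subsequences. -/
def wca {Z : Type*} [NormedAddCommGroup Z] (x : ℕ → Z) : ℝ :=
  ⨅ φ : {φ : ℕ → ℕ // StrictMono φ}, ca (x ∘ φ)

/-- A sequence is weakly Cauchy if `(x*(x_k))` converges for every functional `x*`. -/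
def WeaklyCauchy {Z : Type*} [NormedAddCommGroup Z] [NormedSpace ℝ Z] (x : ℕ → Z) : Prop :=
  ∀ f : StrongDual ℝ Z, ∃ l : ℝ, Tendsto (fun n => f (x n)) atTop (nhds l)

/-- A sequence is weakly null if `x*(x_k) → 0` for every functional `x*`. -/
def WeaklyNull {Z : Type*} [NormedAddCommGroup Z] [NormedSpace ℝ Z] (x : ℕ → Z) : Prop :=
  ∀ f : StrongDual ℝ Z, Tendsto (fun n => f (x n)) atTop (nhds 0)

/-- `cc T`: measure of non-complete-continuity of an operator. -/
def cc {X Y : Type*} [NormedAddCommGroup X] [NormedSpace ℝ X]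
    [NormedAddCommGroup Y] [NormedSpace ℝ Y] (T : X →L[ℝ] Y) : ℝ :=
  sSup {r : ℝ | ∃ x : ℕ → X, (∀ n, ‖x n‖ ≤ 1) ∧ WeaklyCauchy x ∧
    r = ca (fun n => T (x n))}

/-- Non-symmetrized Hausdorff distance `d̂(A,B) = sup_{a ∈ A} dist(a, B)`. -/
def dhat {Z : Type*} [NormedAddCommGroup Z] (A B : Set Z) : ℝ :=
  ⨆ a : A, infDist (a : Z) B

/-- de Blasi measure of weak non-compactness. -/
def deBlasiOmega {Z : Type*} [NormedAddCommGroup Z] [NormedSpace ℝ Z] (A : Set Z) : ℝ :=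
  ⨅ K : {K : Set Z // K.Nonempty ∧ IsWeaklyCompact K}, dhat A K

/-- Hausdorff measure of non-compactness. -/
def hausdorffChi {Z : Type*} [NormedAddCommGroup Z] (A : Set Z) : ℝ :=
  ⨅ F : {F : Set Z // F.Finite ∧ F.Nonempty}, dhat A F

/-- weak* closure of a set of functionals. -/
def wstarClosure {E : Type*} [NormedAddCommGroup E] [NormedSpace ℝ E]
    (A : Set (StrongDual ℝ E)) : Set (StrongDual ℝ E) :=
  StrongDual.toWeakDual ⁻¹' closure (StrongDual.toWeakDual '' A)

/-- `wk_Z(A) = d̂(cl_{w*}(ι(A)), ι(Z))` in the bidual. -/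
def wkMeasure {Z : Type*} [NormedAddCommGroup Z] [NormedSpace ℝ Z] (A : Set Z) : ℝ :=
  dhat (wstarClosure ((inclusionInDoubleDual ℝ Z) '' A))
    (Set.range (inclusionInDoubleDual ℝ Z))

/-- `z` is a weak* cluster point of the sequence `u` of functionals. -/
def IsWeakStarClusterPt {E : Type*} [NormedAddCommGroup E] [NormedSpace ℝ E]
    (z : StrongDual ℝ E) (u : ℕ → StrongDual ℝ E) : Prop :=
  MapClusterPt (StrongDual.toWeakDual z) atTop (fun n => StrongDual.toWeakDual (u n))

/-- `wck(A)`. -/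
def wck {Z : Type*} [NormedAddCommGroup Z] [NormedSpace ℝ Z] (A : Set Z) : ℝ :=
  sSup {r : ℝ | ∃ x : ℕ → Z, (∀ n, x n ∈ A) ∧
    r = sInf {s : ℝ | ∃ (z : StrongDual ℝ (StrongDual ℝ Z)) (x₀ : Z),
      IsWeakStarClusterPt z (fun n => inclusionInDoubleDual ℝ Z (x n)) ∧
      s = ‖z - inclusionInDoubleDual ℝ Z x₀‖}}

/-- `ca_ρ` of a sequence. -/
def caRho {Z : Type*} [NormedAddCommGroup Z] [NormedSpace ℝ Z] (x : ℕ → Z) : ℝ :=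
  ⨆ K : {K : Set (StrongDual ℝ Z) // K ⊆ closedBall 0 1 ∧ IsWeaklyCompact K},
    ⨅ n : ℕ, sSup {r : ℝ | ∃ i j : ℕ, n ≤ i ∧ n ≤ j ∧
      ∃ f ∈ K.1, r = |f (x i) - f (x j)|}

/-- `wca_ρ` of a sequence. -/
def wcaRho {Z : Type*} [NormedAddCommGroup Z] [NormedSpace ℝ Z] (x : ℕ → Z) : ℝ :=
  ⨅ φ : {φ : ℕ → ℕ // StrictMono φ}, caRho (x ∘ φ)

/-- `ca_{ρ*}` of a sequence in a dual space. -/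
def caRhoStar {Z : Type*} [NormedAddCommGroup Z] [NormedSpace ℝ Z]
    (x : ℕ → StrongDual ℝ Z) : ℝ :=
  ⨆ K : {K : Set Z // K ⊆ closedBall 0 1 ∧ IsWeaklyCompact K},
    ⨅ n : ℕ, sSup {r : ℝ | ∃ i j : ℕ, n ≤ i ∧ n ≤ j ∧
      ∃ v ∈ K.1, r = |x i v - x j v|}

/-- `wca_{ρ*}` of a sequence in a dual space. -/
def wcaRhoStar {Z : Type*} [NormedAddCommGroup Z] [NormedSpace ℝ Z]
    (x : ℕ → StrongDual ℝ Z) : ℝ :=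
  ⨅ φ : {φ : ℕ → ℕ // StrictMono φ}, caRhoStar (x ∘ φ)

/-- `δ(x_k)`. -/
def deltaSeq {Z : Type*} [NormedAddCommGroup Z] [NormedSpace ℝ Z] (x : ℕ → Z) : ℝ :=
  ⨆ f : (closedBall (0 : StrongDual ℝ Z) 1),
    ⨅ n : ℕ, sSup {r : ℝ | ∃ i j : ℕ, n ≤ i ∧ n ≤ j ∧
      r = |(f : StrongDual ℝ Z) (x i) - (f : StrongDual ℝ Z) (x j)|}

/-- The adjoint of a bounded operator between Banach spaces. -/
def adjointOp {X Y : Type*} [NormedAddCommGroup X] [NormedSpace ℝ X]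
    [NormedAddCommGroup Y] [NormedSpace ℝ Y] (T : X →L[ℝ] Y) :
    StrongDual ℝ Y →L[ℝ] StrongDual ℝ X :=
  (ContinuousLinearMap.compL ℝ X Y ℝ).flip T

/-!
Let `(f_k)` be weakly Cauchy in `B_{X*}` and `b < ca(T* f_k)`. Choose `i_k, j_k ≥ k` and
`y_k ∈ B_Y` with `b < |(f_{i_k} - f_{j_k})(T y_k)|`. The functionals
`h_k = (f_{i_k} - f_{j_k}) / 2` form a weakly null sequence in `B_{X*}`, so `{0} ∪ {h_k}` is
weakly compact; as `h_k → 0` pointwise, this one set sees an oscillation of size about `b / 2`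
in every subsequence of `x_k = T y_k`. Hence `b / 2 ≤ wca_ρ(x_k) ≤ C wk_X({x_k}) ≤ C wk_X(T(B_Y))`.
-/

instance : Nonempty {φ : ℕ → ℕ // StrictMono φ} := ⟨⟨id, strictMono_id⟩⟩

lemma adjointOp_apply {X Y : Type*} [NormedAddCommGroup X] [NormedSpace ℝ X]
    [NormedAddCommGroup Y] [NormedSpace ℝ Y] (T : X →L[ℝ] Y) (f : StrongDual ℝ Y) (x : X) :
    adjointOp T f x = f (T x) := rfl

section WeakStar

variable {E : Type*} [NormedAddCommGroup E] [NormedSpace ℝ E]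

lemma norm_le_of_mem_wstarClosure {S : Set (StrongDual ℝ E)} {R : ℝ} (hR : 0 ≤ R)
    (hS : ∀ s ∈ S, ‖s‖ ≤ R) {z : StrongDual ℝ E} (hz : z ∈ wstarClosure S) : ‖z‖ ≤ R := by
  have hclosed : IsClosed {F : WeakDual ℝ E | ∀ v : E, ‖F v‖ ≤ R * ‖v‖} := by
    simp only [Set.ofPred_forall]
    exact isClosed_iInter fun v =>
      isClosed_le (WeakDual.eval_continuous v).norm continuous_const
  have hsub : closure (StrongDual.toWeakDual '' S) ⊆ {F | ∀ v : E, ‖F v‖ ≤ R * ‖v‖} := by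
    refine closure_minimal ?_ hclosed
    rintro _ ⟨s, hs, rfl⟩ v
    exact (s.le_opNorm v).trans (mul_le_mul_of_nonneg_right (hS s hs) (norm_nonneg v))
  exact z.opNorm_le_bound hR (hsub hz)

end WeakStar

section WkMeasure

variable {Z : Type*} [NormedAddCommGroup Z] [NormedSpace ℝ Z]

lemma wkMeasure_nonneg (A : Set Z) : 0 ≤ wkMeasure A :=
  Real.iSup_nonneg fun _ => infDist_nonneg

lemma wkMeasure_mono {A B : Set Z} (hAB : A ⊆ B) {R : ℝ} (hR : 0 ≤ R)
    (hB : ∀ b ∈ B, ‖b‖ ≤ R) : wkMeasure A ≤ wkMeasure B := by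
  set ι := inclusionInDoubleDual ℝ Z
  have hbdd : BddAbove (Set.range fun a : wstarClosure (ι '' B) =>
      infDist (a : StrongDual ℝ (StrongDual ℝ Z)) (Set.range ι)) := by
    refine ⟨R, ?_⟩
    rintro _ ⟨⟨a, ha⟩, rfl⟩
    calc infDist a (Set.range ι) ≤ dist a (ι 0) := infDist_le_dist_of_mem (Set.mem_range_self 0)
      _ = ‖a‖ := by rw [map_zero, dist_zero_right]
      _ ≤ R := norm_le_of_mem_wstarClosure hR
          (by rintro _ ⟨b, hb, rfl⟩; exact (double_dual_bound ℝ Z b).trans (hB b hb)) ha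
  have hsub : wstarClosure (ι '' A) ⊆ wstarClosure (ι '' B) :=
    Set.preimage_mono (closure_mono (Set.image_mono (Set.image_mono hAB)))
  exact Real.iSup_le (fun a => le_ciSup_of_le hbdd ⟨a, hsub a.2⟩ le_rfl) (wkMeasure_nonneg B)

end WkMeasure

lemma exists_lt_norm_sub_of_lt_ca {Z : Type*} [NormedAddCommGroup Z] {x : ℕ → Z} {b : ℝ}
    (hb : b < ca x) (k : ℕ) :
    ∃ i j, k ≤ i ∧ k ≤ j ∧ b < ‖x i - x j‖ := by
  set s : ℕ → Set ℝ := fun n => {r | ∃ i j : ℕ, n ≤ i ∧ n ≤ j ∧ r = ‖x i - x j‖}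
  have hbdd : BddBelow (Set.range fun n => sSup (s n)) := by
    refine ⟨0, ?_⟩
    rintro _ ⟨n, rfl⟩
    exact Real.sSup_nonneg (by rintro _ ⟨i, j, -, -, rfl⟩; exact norm_nonneg _)
  have hk : b < sSup (s k) := hb.trans_le (ciInf_le hbdd k)
  have hne : (s k).Nonempty := ⟨‖x k - x k‖, k, k, le_rfl, le_rfl, rfl⟩
  obtain ⟨_, ⟨i, j, hi, hj, rfl⟩, hlt⟩ := exists_lt_of_lt_csSup hne hk
  exact ⟨i, j, hi, hj, hlt⟩

section WeakSequences

variable {Z : Type*} [NormedAddCommGroup Z] [NormedSpace ℝ Z]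

lemma WeaklyNull.isWeaklyCompact_insert_zero_range {g : ℕ → Z} (hg : WeaklyNull g) :
    IsWeaklyCompact (insert (0 : Z) (Set.range g)) := by
  have hinj : Function.Injective (topDualPairing ℝ Z).flip := fun u v huv =>
    SeparatingDual.eq_iff_forall_dual_eq.2 fun f => DFunLike.congr_fun huv f
  have htend : Tendsto (fun n => toWeakSpace ℝ Z (g n)) atTop (𝓝 (toWeakSpace ℝ Z 0)) :=
    (WeakBilin.tendsto_iff_forall_eval_tendsto _ hinj).mpr fun f => by
      show Tendsto (fun n => f (g n)) atTop (𝓝 (f 0))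
      simpa using hg f
  unfold IsWeaklyCompact
  rw [Set.image_insert_eq, ← Set.range_comp]
  exact htend.isCompact_insert_range

lemma WeaklyCauchy.weaklyNull_smul_sub {f : ℕ → Z} (hf : WeaklyCauchy f) (c : ℝ)
    {I J : ℕ → ℕ} (hI : Tendsto I atTop atTop) (hJ : Tendsto J atTop atTop) :
    WeaklyNull fun k => c • (f (I k) - f (J k)) := by
  intro F
  obtain ⟨l, hl⟩ := hf F
  simpa using ((hl.comp hI).sub (hl.comp hJ)).const_mul c

lemma WeaklyNull.tendsto_apply {g : ℕ → StrongDual ℝ Z} (hg : WeaklyNull g) (v : Z) :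
    Tendsto (fun k => g k v) atTop (𝓝 0) :=
  hg (inclusionInDoubleDual ℝ Z v)

end WeakSequences

section CaRho

variable {Z : Type*} [NormedAddCommGroup Z] [NormedSpace ℝ Z]

lemma le_caRho_of_forall_exists {x : ℕ → Z} {M : ℝ} (hx : ∀ n, ‖x n‖ ≤ M)
    {K : Set (StrongDual ℝ Z)} (hK : K ⊆ closedBall 0 1) (hKc : IsWeaklyCompact K) {b : ℝ}
    (hb : ∀ n, ∃ i j, n ≤ i ∧ n ≤ j ∧ ∃ f ∈ K, b ≤ |f (x i) - f (x j)|) :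
    b ≤ caRho x := by
  have hbound : ∀ K' ⊆ closedBall (0 : StrongDual ℝ Z) 1, ∀ n,
      ∀ r ∈ {r : ℝ | ∃ i j : ℕ, n ≤ i ∧ n ≤ j ∧ ∃ f ∈ K', r = |f (x i) - f (x j)|},
      r ≤ 2 * M := by
    rintro K' hK' n _ ⟨i, j, -, -, f, hf, rfl⟩
    have hf1 : ‖f‖ ≤ 1 := mem_closedBall_zero_iff.1 (hK' hf)
    have hfx : ∀ m, |f (x m)| ≤ M := fun m =>
      (f.le_opNorm _).trans (by nlinarith [hx m, norm_nonneg (x m), norm_nonneg f])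
    linarith [abs_sub (f (x i)) (f (x j)), hfx i, hfx j]
  have hM : 0 ≤ M := (norm_nonneg _).trans (hx 0)
  refine le_ciSup_of_le ⟨2 * M, ?_⟩ ⟨K, hK, hKc⟩ (le_ciInf fun n => ?_)
  · rintro _ ⟨⟨K', hK', -⟩, rfl⟩
    refine (ciInf_le ⟨0, ?_⟩ 0).trans (Real.sSup_le (hbound K' hK' 0) (by positivity))
    rintro _ ⟨n, rfl⟩
    exact Real.sSup_nonneg (by rintro _ ⟨i, j, -, -, f, -, rfl⟩; exact abs_nonneg _)
  · obtain ⟨i, j, hi, hj, f, hf, hbf⟩ := hb n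
    exact hbf.trans (le_csSup ⟨2 * M, hbound K hK n⟩ ⟨i, j, hi, hj, f, hf, rfl⟩)

lemma le_wcaRho_of_weaklyNull {x : ℕ → Z} {M : ℝ} (hx : ∀ n, ‖x n‖ ≤ M)
    {h : ℕ → StrongDual ℝ Z} (hh : WeaklyNull h) (hh1 : ∀ k, ‖h k‖ ≤ 1) {c : ℝ}
    (hc : ∀ k, c ≤ |h k (x k)|) : c ≤ wcaRho x := by
  have hK : insert 0 (Set.range h) ⊆ closedBall (0 : StrongDual ℝ Z) 1 := by
    rintro _ (rfl | ⟨k, rfl⟩)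
    · exact mem_closedBall_self zero_le_one
    · exact mem_closedBall_zero_iff.2 (hh1 k)
  refine le_ciInf fun ⟨φ, hφ⟩ => le_of_forall_pos_le_add fun ε hε => ?_
  rw [← sub_le_iff_le_add]
  refine le_caRho_of_forall_exists (fun n => hx (φ n)) hK hh.isWeaklyCompact_insert_zero_range
    fun n => ?_
  obtain ⟨N, hN⟩ := Metric.tendsto_atTop.1 (hh.tendsto_apply (x (φ n))) ε hε
  have hsmall : |h (φ (max n N)) (x (φ n))| < ε := by
    simpa [Real.dist_eq] using hN _ ((le_max_right n N).trans hφ.le_apply)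
  refine ⟨max n N, n, le_max_left n N, le_rfl, h (φ (max n N)),
    Set.mem_insert_of_mem _ (Set.mem_range_self _), ?_⟩
  linarith [hc (φ (max n N)), abs_sub_abs_le_abs_sub (h (φ (max n N)) (x (φ (max n N))))
    (h (φ (max n N)) (x (φ n)))]

end CaRho

section Adjoint

variable {X Y : Type*} [NormedAddCommGroup X] [NormedSpace ℝ X]
  [NormedAddCommGroup Y] [NormedSpace ℝ Y]

lemma exists_half_le_wcaRho_of_lt_ca_adjointOp (T : Y →L[ℝ] X) {f : ℕ → StrongDual ℝ X}
    (hf1 : ∀ n, ‖f n‖ ≤ 1) (hf : WeaklyCauchy f) {b : ℝ}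
    (hb : b < ca fun n => adjointOp T (f n)) :
    ∃ y : ℕ → Y, (∀ k, ‖y k‖ ≤ 1) ∧ b / 2 ≤ wcaRho fun k => T (y k) := by
  have hwit : ∀ k, ∃ i j, k ≤ i ∧ k ≤ j ∧ ∃ y : Y, ‖y‖ ≤ 1 ∧ b < |f i (T y) - f j (T y)| := by
    intro k
    obtain ⟨i, j, hi, hj, hlt⟩ := exists_lt_norm_sub_of_lt_ca hb k
    obtain ⟨y, hy1, hy⟩ := (adjointOp T (f i) - adjointOp T (f j)).exists_lt_apply_of_lt_opNorm hlt
    exact ⟨i, j, hi, hj, y, hy1.le, by simpa [adjointOp_apply] using hy⟩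
  choose I J hI hJ y hy1 hy using hwit
  refine ⟨y, hy1, le_wcaRho_of_weaklyNull (M := ‖T‖) (fun k => T.unit_le_opNorm _ (hy1 k))
    (hf.weaklyNull_smul_sub 2⁻¹ (tendsto_atTop_mono hI tendsto_id)
      (tendsto_atTop_mono hJ tendsto_id)) (fun k => ?_) (fun k => ?_)⟩
  · calc ‖(2⁻¹ : ℝ) • (f (I k) - f (J k))‖ ≤ 2⁻¹ * (‖f (I k)‖ + ‖f (J k)‖) := by
          rw [norm_smul, Real.norm_of_nonneg (by norm_num)]
          gcongr
          exact norm_sub_le _ _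
      _ ≤ 1 := by linarith [hf1 (I k), hf1 (J k)]
  · have hhalf : ((2⁻¹ : ℝ) • (f (I k) - f (J k))) (T (y k)) =
        2⁻¹ * (f (I k) (T (y k)) - f (J k) (T (y k))) := rfl
    rw [hhalf, abs_mul, abs_of_pos (by norm_num : (0 : ℝ) < 2⁻¹)]
    linarith [hy k]

lemma ca_adjointOp_le {C : ℝ} (hC : 0 < C)
    (h : ∀ x : ℕ → X, (∃ M : ℝ, ∀ n, ‖x n‖ ≤ M) → wcaRho x ≤ C * wkMeasure (Set.range x))
    (T : Y →L[ℝ] X) {f : ℕ → StrongDual ℝ X} (hf1 : ∀ n, ‖f n‖ ≤ 1) (hf : WeaklyCauchy f) :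
    ca (fun n => adjointOp T (f n)) ≤ 2 * C * wkMeasure (T '' closedBall 0 1) := by
  refine le_of_forall_lt_imp_le_of_dense fun b hb => ?_
  obtain ⟨y, hy1, hby⟩ := exists_half_le_wcaRho_of_lt_ca_adjointOp T hf1 hf hb
  have hTy : ∀ k, ‖T (y k)‖ ≤ ‖T‖ := fun k => T.unit_le_opNorm _ (hy1 k)
  have hrange : Set.range (fun k => T (y k)) ⊆ T '' closedBall 0 1 := by
    rintro _ ⟨k, rfl⟩
    exact ⟨y k, mem_closedBall_zero_iff.2 (hy1 k), rfl⟩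
  have himage : ∀ v ∈ T '' closedBall (0 : Y) 1, ‖v‖ ≤ ‖T‖ := by
    rintro _ ⟨v, hv, rfl⟩
    exact T.unit_le_opNorm _ (mem_closedBall_zero_iff.1 hv)
  have := calc b / 2 ≤ wcaRho fun k => T (y k) := hby
    _ ≤ C * wkMeasure (Set.range fun k => T (y k)) := h _ ⟨‖T‖, hTy⟩
    _ ≤ C * wkMeasure (T '' closedBall 0 1) :=
      mul_le_mul_of_nonneg_left (wkMeasure_mono hrange (norm_nonneg T) himage) hC.le
  linarith

end Adjoint

theorem statement11_general {X : Type u} [NormedAddCommGroup X] [NormedSpace ℝ X]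
    (C : ℝ) (hC : 0 < C)
    (h : ∀ x : ℕ → X, (∃ M : ℝ, ∀ n, ‖x n‖ ≤ M) →
      wcaRho x ≤ C * wkMeasure (Set.range x)) :
    ∀ (Y : Type v) [NormedAddCommGroup Y] [NormedSpace ℝ Y] [CompleteSpace Y]
      (T : Y →L[ℝ] X),
      cc (adjointOp T) ≤ 2 * C * wkMeasure (T '' closedBall 0 1) := by
  intro Y _ _ _ T
  refine Real.sSup_le ?_ (mul_nonneg (by positivity) (wkMeasure_nonneg _))
  rintro _ ⟨f, hf1, hf, rfl⟩
  exact ca_adjointOp_le hC h T hf1 hf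

/-- If `wca_ρ(x_n) ≤ C·wk_X({x_n})` for every bounded sequence in `X`, then for
every Banach space `Y` and every operator `T : Y → X`, `cc(T*) ≤ 2C·wk_X(T(B_Y))`. -/
theorem statement11 {X : Type u} [NormedAddCommGroup X] [NormedSpace ℝ X] [CompleteSpace X]
    (C : ℝ) (hC : 0 < C)
    (h : ∀ x : ℕ → X, (∃ M : ℝ, ∀ n, ‖x n‖ ≤ M) →
      wcaRho x ≤ C * wkMeasure (Set.range x)) :
    ∀ (Y : Type v) [NormedAddCommGroup Y] [NormedSpace ℝ Y] [CompleteSpace Y]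
      (T : Y →L[ℝ] X),
      cc (adjointOp T) ≤ 2 * C * wkMeasure (T '' closedBall 0 1) :=
  statement11_general C hC h

end
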